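/- arXiv:1409.6524 — 4 statements merged into one kernel-verified Lean document; each statement's English description precedes it below -/
import Mathlib

section
/- Let P1 be an invertible Hermitian n×n matrix and W̃_B an n×2n complex matrix. Suppose that for all (f1, f0) ∈ ker W̃_B we have f1* P1 f1 - f0* P1 f0 ≤ 0. Then rank W̃_B = n. -/
/-!
Diagonalise `P1 = U D U*`. Taking the eigenvectors of positive eigenvalue in the first component
and those of negative eigenvalue in the second gives an `n`-dimensional subspace of `ℂⁿ ⊕ ℂⁿ` on
which `f1* P1 f1 - f0* P1 f0 = ∑ |dᵢ| |gᵢ|²` is positive definite (all `dᵢ ≠ 0` as `P1` is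
invertible). If `rank W̃_B < n`, then `W̃_B` restricted to that subspace has a nonzero kernel vector,
contradicting the hypothesis.
-/

open Matrix

namespace Matrix

theorem exists_mulVec_eq_zero_of_rank_lt {K n : Type*} [Field K] [Fintype n] [DecidableEq n]
    (M : Matrix n n K) (h : M.rank < Fintype.card n) : ∃ v ≠ 0, M *ᵥ v = 0 :=
  exists_mulVec_eq_zero_iff.mpr <| by
    by_contra hdet
    exact h.ne (rank_of_det_ne_zero hdet)

namespace IsHermitian

variable {𝕜 n : Type*} [RCLike 𝕜] [Fintype n] [DecidableEq n] {A : Matrix n n 𝕜}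
  (hA : A.IsHermitian)

theorem eigenvalues_ne_zero_of_isUnit (hA' : IsUnit A) (i : n) : hA.eigenvalues i ≠ 0 := by
  have hdet : A.det ≠ 0 := ((isUnit_iff_isUnit_det A).mp hA').ne_zero
  rw [hA.det_eq_prod_eigenvalues] at hdet
  exact_mod_cast Finset.prod_ne_zero_iff.mp hdet i (Finset.mem_univ i)

theorem star_eigenvectorUnitary_mulVec_dotProduct (v : n → 𝕜) :
    star ((hA.eigenvectorUnitary : Matrix n n 𝕜) *ᵥ v) ⬝ᵥ A *ᵥ (hA.eigenvectorUnitary *ᵥ v) =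
      ∑ i, ((hA.eigenvalues i * ‖v i‖ ^ 2 : ℝ) : 𝕜) := by
  set U : Matrix n n 𝕜 := (hA.eigenvectorUnitary : Matrix n n 𝕜)
  have hAU : A * U = U * diagonal (RCLike.ofReal ∘ hA.eigenvalues) := by
    conv_lhs => rw [hA.spectral_theorem]
    simp [U, mul_assoc]
  rw [mulVec_mulVec, hAU, ← mulVec_mulVec, star_mulVec, ← dotProduct_mulVec, mulVec_mulVec,
    ← star_eq_conjTranspose, Unitary.coe_star_mul_self, one_mulVec]
  simp only [dotProduct, mulVec_diagonal, Pi.star_apply, RCLike.star_def, Function.comp_apply]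
  push_cast
  refine Finset.sum_congr rfl fun i _ => ?_
  rw [← RCLike.conj_mul]
  ring

noncomputable def eigenvectorsPos : Matrix n n 𝕜 :=
  (hA.eigenvectorUnitary : Matrix n n 𝕜) * diagonal fun i => if 0 < hA.eigenvalues i then 1 else 0

noncomputable def eigenvectorsNonpos : Matrix n n 𝕜 :=
  (hA.eigenvectorUnitary : Matrix n n 𝕜) * diagonal fun i => if 0 < hA.eigenvalues i then 0 else 1

theorem re_eigenvectorsPos_sub_eigenvectorsNonpos (g : n → 𝕜) :
    RCLike.re (star (hA.eigenvectorsPos *ᵥ g) ⬝ᵥ A *ᵥ (hA.eigenvectorsPos *ᵥ g) -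
      star (hA.eigenvectorsNonpos *ᵥ g) ⬝ᵥ A *ᵥ (hA.eigenvectorsNonpos *ᵥ g)) =
      ∑ i, |hA.eigenvalues i| * ‖g i‖ ^ 2 := by
  rw [eigenvectorsPos, eigenvectorsNonpos, ← mulVec_mulVec, ← mulVec_mulVec,
    star_eigenvectorUnitary_mulVec_dotProduct, star_eigenvectorUnitary_mulVec_dotProduct,
    ← Finset.sum_sub_distrib, map_sum]
  refine Finset.sum_congr rfl fun i _ => ?_
  by_cases hi : 0 < hA.eigenvalues i
  · simp [mulVec_diagonal, hi, abs_of_pos hi]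
  · simp [mulVec_diagonal, hi, abs_of_nonpos (not_lt.mp hi)]

theorem re_eigenvectorsPos_sub_eigenvectorsNonpos_pos (hA' : IsUnit A) {g : n → 𝕜}
    (hg : g ≠ 0) :
    0 < RCLike.re (star (hA.eigenvectorsPos *ᵥ g) ⬝ᵥ A *ᵥ (hA.eigenvectorsPos *ᵥ g) -
      star (hA.eigenvectorsNonpos *ᵥ g) ⬝ᵥ A *ᵥ (hA.eigenvectorsNonpos *ᵥ g)) := by
  obtain ⟨i, hi⟩ := Function.ne_iff.mp hg
  rw [re_eigenvectorsPos_sub_eigenvectorsNonpos]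
  refine Finset.sum_pos' (fun j _ => by positivity) ⟨i, Finset.mem_univ i, ?_⟩
  have := hA.eigenvalues_ne_zero_of_isUnit hA' i
  positivity

end IsHermitian
end Matrix

theorem stmt3 (n : ℕ) (P1 : Matrix (Fin n) (Fin n) ℂ)
    (hHerm : P1.IsHermitian) (hInv : IsUnit P1)
    (WB : Matrix (Fin n) (Fin n ⊕ Fin n) ℂ)
    (hker : ∀ f1 f0 : Fin n → ℂ, WB.mulVec (Sum.elim f1 f0) = 0 →
      (star f1 ⬝ᵥ P1.mulVec f1 - star f0 ⬝ᵥ P1.mulVec f0).re ≤ 0) :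
    WB.rank = n := by
  refine le_antisymm (by simpa using WB.rank_le_card_height) (not_lt.mp fun hlt => ?_)
  let T := fromRows hHerm.eigenvectorsPos hHerm.eigenvectorsNonpos
  obtain ⟨g, hg, hWT⟩ := (WB * T).exists_mulVec_eq_zero_of_rank_lt <| by
    simpa using (rank_mul_le_left WB T).trans_lt hlt
  rw [← mulVec_mulVec, fromRows_mulVec] at hWT
  exact (hker _ _ hWT).not_gt (hHerm.re_eigenvectorsPos_sub_eigenvectorsNonpos_pos hInv hg)
end

section
/- Let V ∈ C^{n×n} and suppose that ℓ*(V*V - I)ℓ ≤ 0 for all ℓ ∈ C^n. Let W1, W2 ∈ C^{n×n} with W1 + W2 invertible and V = (W1+W2)^{-1}(W1 - W2), and set W_B = [W1 W2] (the n×2n matrix) and Σ = [[0, I],[I, 0]]. Then W_B Σ W_B* ≥ 0 (is positive semidefinite). -/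
/-!
With `S = W1 + W2` we have `S V = W1 - W2`, hence
`S (1 - V Vᴴ) Sᴴ = (W1 + W2)(W1 + W2)ᴴ - (W1 - W2)(W1 - W2)ᴴ = 2 (W1 W2ᴴ + W2 W1ᴴ)`,
and the left-hand side is a congruence of `1 - V Vᴴ`. The hypothesis says `Vᴴ V ≤ 1`, i.e. `‖V‖ ≤ 1`
in the operator norm, and since `‖Vᴴ‖ = ‖V‖` this is equivalent to `V Vᴴ ≤ 1`.
-/

open Matrix
open scoped ComplexOrder Matrix.Norms.L2Operator MatrixOrder

theorem CStarAlgebra.star_mul_self_le_one_iff_mul_star_self_le_one {A : Type*} [CStarAlgebra A]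
    [PartialOrder A] [StarOrderedRing A] {a : A} : star a * a ≤ 1 ↔ a * star a ≤ 1 := by
  rw [← norm_le_one_iff_of_nonneg _ (star_mul_self_nonneg a),
    ← norm_le_one_iff_of_nonneg _ (mul_star_self_nonneg a),
    CStarRing.norm_star_mul_self, CStarRing.norm_self_mul_star]

theorem add_mul_one_sub_mul_star_mul_star_add {R : Type*} [Ring R] [StarRing R] {a b v : R}
    (h : (a + b) * v = a - b) :
    (a + b) * (1 - v * star v) * star (a + b) = 2 • (a * star b + b * star a) := by
  have hconj : (a + b) * (v * star v) * star (a + b) = (a - b) * star (a - b) := by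
    simp only [← h, star_mul, mul_assoc]
  rw [mul_sub, sub_mul, mul_one, hconj]
  simp only [star_add, star_sub]
  noncomm_ring

namespace Matrix

theorem fromCols_mul_fromBlocks_swap_mul_conjTranspose {R m n : Type*} [Semiring R] [StarRing R]
    [Fintype n] [DecidableEq n] (A B : Matrix m n R) :
    fromCols A B * (fromBlocks 0 1 1 0 : Matrix (n ⊕ n) (n ⊕ n) R) * (fromCols A B)ᴴ =
      A * Bᴴ + B * Aᴴ := by
  rw [fromCols_mul_fromBlocks, conjTranspose_fromCols_eq_fromRows_conjTranspose,
    fromCols_mul_fromRows]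
  simp [add_comm]

theorem IsHermitian.posSemidef_iff_re_dotProduct_mulVec_nonneg {𝕜 n : Type*} [RCLike 𝕜]
    [Fintype n] {A : Matrix n n 𝕜} (hA : A.IsHermitian) :
    A.PosSemidef ↔ ∀ x : n → 𝕜, 0 ≤ RCLike.re (star x ⬝ᵥ A *ᵥ x) := by
  simp only [posSemidef_iff_dotProduct_mulVec, hA, true_and]
  exact forall_congr' fun x ↦ by
    rw [RCLike.nonneg_iff, hA.im_star_dotProduct_mulVec_self, and_iff_left rfl]

end Matrix

theorem stmt4 (n : ℕ) (V W1 W2 : Matrix (Fin n) (Fin n) ℂ)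
    (hQuad : ∀ ℓ : Fin n → ℂ,
      (star ℓ ⬝ᵥ (Vᴴ * V - 1).mulVec ℓ).re ≤ 0)
    (hInv : IsUnit (W1 + W2))
    (hV : V = (W1 + W2)⁻¹ * (W1 - W2)) :
    (Matrix.fromCols W1 W2 *
      (Matrix.fromBlocks (0 : Matrix (Fin n) (Fin n) ℂ) 1 1 0 : Matrix (Fin n ⊕ Fin n) (Fin n ⊕ Fin n) ℂ) *
      (Matrix.fromCols W1 W2)ᴴ).PosSemidef := by
  rw [fromCols_mul_fromBlocks_swap_mul_conjTranspose]
  have hV1 : star V * V ≤ 1 := by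
    rw [star_eq_conjTranspose, le_iff, (isHermitian_one.sub
      (isHermitian_conjTranspose_mul_self V)).posSemidef_iff_re_dotProduct_mulVec_nonneg]
    intro x
    rw [← neg_sub, neg_mulVec, dotProduct_neg, map_neg, neg_nonneg]
    exact hQuad x
  have hV2 : V * star V ≤ 1 := CStarAlgebra.star_mul_self_le_one_iff_mul_star_self_le_one.mp hV1
  have hSV : (W1 + W2) * V = W1 - W2 := by
    rw [hV, mul_nonsing_inv_cancel_left _ _ ((isUnit_iff_isUnit_det _).mp hInv)]
  have hconj : 0 ≤ (W1 + W2) * (1 - V * star V) * star (W1 + W2) :=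
    star_right_conjugate_nonneg (sub_nonneg.mpr hV2) _
  rw [add_mul_one_sub_mul_star_mul_star_add hSV, nonneg_iff_posSemidef,
    ← Nat.cast_smul_eq_nsmul ℝ] at hconj
  have hhalf := hconj.smul (inv_nonneg.mpr (zero_le_two : (0 : ℝ) ≤ 2))
  rwa [Nat.cast_ofNat, inv_smul_smul₀ two_ne_zero] at hhalf
end

section
/- Let W1, W2 ∈ C^{n×n} with W1 + W2 invertible, and let V = (W1+W2)^{-1}(W1-W2). Then every element (f, e) of the kernel of the n×2n matrix W_B = [W1 W2] is of the form f = (I-V)ℓ, e = (-I-V)ℓ for some ℓ ∈ C^n, and conversely every vector of this form lies in ker W_B. -/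
/-!
Write `K = W₁ + W₂`, so that `K V = W₁ - W₂`, i.e. `W₁ = ½ K (1 + V)` and `W₂ = ½ K (1 - V)`.
Since `K` is invertible, `W₁ f + W₂ e = 0` becomes `(1 + V) f + (1 - V) e = 0`, i.e.
`f + e = -V (f - e)`. With `ℓ = ½ (f - e)` this says exactly `f = (1 - V) ℓ` and
`e = (-1 - V) ℓ`; conversely `W₁ (1 - V) + W₂ (-1 - V) = (W₁ - W₂) - K V = 0`.
-/

open Matrix

theorem mul_one_sub_add_mul_neg_one_sub_eq_zero {R : Type*} [Ring R] {W₁ W₂ V : R}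
    (hV : (W₁ + W₂) * V = W₁ - W₂) : W₁ * (1 - V) + W₂ * (-1 - V) = 0 := by
  rw [show W₁ * (1 - V) + W₂ * (-1 - V) = (W₁ - W₂) - (W₁ + W₂) * V by noncomm_ring, hV,
    sub_self]

namespace Matrix

variable {ι R : Type*} [Fintype ι] [DecidableEq ι] [CommRing R]

theorem eq_zero_of_isUnit_of_mulVec_eq_zero {A : Matrix ι ι R} (hA : IsUnit A) {x : ι → R}
    (hx : A *ᵥ x = 0) : x = 0 := by
  have hdet : IsUnit A.det := (isUnit_iff_isUnit_det A).mp hA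
  rw [← one_mulVec x, ← nonsing_inv_mul A hdet, ← mulVec_mulVec, hx, mulVec_zero]

variable {W₁ W₂ V : Matrix ι ι R}

theorem add_add_mulVec_sub_eq_zero (hK : IsUnit (W₁ + W₂)) (hV : (W₁ + W₂) * V = W₁ - W₂)
    {f e : ι → R} (h : W₁ *ᵥ f + W₂ *ᵥ e = 0) : f + e + V *ᵥ (f - e) = 0 := by
  refine eq_zero_of_isUnit_of_mulVec_eq_zero hK ?_
  calc (W₁ + W₂) *ᵥ (f + e + V *ᵥ (f - e))
      = (W₁ + W₂) *ᵥ (f + e) + (W₁ - W₂) *ᵥ (f - e) := by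
        rw [mulVec_add, mulVec_mulVec, hV]
    _ = (2 : R) • (W₁ *ᵥ f + W₂ *ᵥ e) := by
        simp only [add_mulVec, sub_mulVec, mulVec_add, mulVec_sub]
        module
    _ = 0 := by rw [h, smul_zero]

theorem mulVec_add_mulVec_eq_zero_iff [Invertible (2 : R)] (hK : IsUnit (W₁ + W₂))
    (hV : (W₁ + W₂) * V = W₁ - W₂) (f e : ι → R) :
    W₁ *ᵥ f + W₂ *ᵥ e = 0 ↔ ∃ ℓ : ι → R, f = (1 - V) *ᵥ ℓ ∧ e = (-1 - V) *ᵥ ℓ := by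
  constructor
  · intro h
    have hVfe : V *ᵥ (f - e) = -(f + e) :=
      eq_neg_of_add_eq_zero_right (add_add_mulVec_sub_eq_zero hK hV h)
    refine ⟨(⅟2 : R) • (f - e), ?_, ?_⟩
    · rw [sub_mulVec, one_mulVec, mulVec_smul, hVfe]
      conv_lhs => rw [← one_smul R f, ← invOf_mul_self (2 : R), mul_smul]
      module
    · rw [sub_mulVec, neg_mulVec, one_mulVec, mulVec_smul, hVfe]
      conv_lhs => rw [← one_smul R e, ← invOf_mul_self (2 : R), mul_smul]
      module
  · rintro ⟨ℓ, rfl, rfl⟩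
    rw [mulVec_mulVec, mulVec_mulVec, ← add_mulVec,
      mul_one_sub_add_mul_neg_one_sub_eq_zero hV, zero_mulVec]

end Matrix

theorem stmt6 (n : ℕ) (W1 W2 V : Matrix (Fin n) (Fin n) ℂ)
    (hInv : IsUnit (W1 + W2))
    (hV : V = (W1 + W2)⁻¹ * (W1 - W2)) :
    ∀ f e : Fin n → ℂ,
      (Matrix.fromCols W1 W2).mulVec (Sum.elim f e) = 0 ↔
      ∃ ℓ : Fin n → ℂ, f = (1 - V).mulVec ℓ ∧ e = (-1 - V).mulVec ℓ := by
  have hKV : (W1 + W2) * V = W1 - W2 := by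
    rw [hV, mul_nonsing_inv_cancel_left _ _ ((isUnit_iff_isUnit_det _).mp hInv)]
  intro f e
  rw [fromCols_mulVec_sumElim]
  exact mulVec_add_mulVec_eq_zero_iff hInv hKV f e
end

section
/- Let P1 be an invertible Hermitian n×n matrix and W̃_B an n×2n matrix of rank n. Define W_B = W̃_B [[P1, -P1],[I, I]]^{-1} and Σ = [[0, I],[I, 0]]. Then the following are equivalent: (i) for all (f1, f0) ∈ ker W̃_B, f1* P1 f1 - f0* P1 f0 ≤ 0; (ii) W_B Σ W_B* ≥ 0. -/
/-!
With `T = [[P1, -P1], [I, I]]` and `y = T f`, one has `y* Σ y = 2 (f1* P1 f1 - f0* P1 f0)` and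
`ker W̃_B = T⁻¹ (ker W_B)`, so (i) says that the `Σ`-form is nonpositive on `ker W_B`, while (ii)
says that it is nonnegative on `ran W_B* = (ker W_B)⊥`. Both subspaces are `n`-dimensional in
`ℂ^{2n}`, and `Σ` is positive definite on the diagonal `{(v, v)}` and negative definite on the
antidiagonal `{(v, -v)}`. For a Hermitian involution `S`, nonpositivity on an `n`-dimensional `K`
forces nonnegativity on `K⊥`: if `x ⊥ K` had negative value, `S x` would enlarge `K` to an
`(n + 1)`-dimensional nonpositive subspace, which must meet the `n`-dimensional positive one.
Applying this to `Σ` and to `-Σ` gives both implications.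
-/

open Matrix Module
open scoped ComplexOrder

namespace Matrix

variable {ι κ m R : Type*}

section CommRing

variable [Fintype ι] [Fintype κ] [CommRing R]

theorem star_dotProduct_conjTranspose_mulVec [StarRing R] (A : Matrix ι κ R) (x : ι → R)
    (y : κ → R) : star y ⬝ᵥ Aᴴ *ᵥ x = star (A *ᵥ y) ⬝ᵥ x := by
  rw [star_mulVec, ← dotProduct_mulVec]

theorem forall_mul_nonsing_inv_mulVec_eq_zero_imp_iff [DecidableEq ι] {T : Matrix ι ι R}
    (hT : IsUnit T.det) (A : Matrix m ι R) (p : (ι → R) → Prop) :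
    (∀ y, (A * T⁻¹) *ᵥ y = 0 → p y) ↔ ∀ v, A *ᵥ v = 0 → p (T *ᵥ v) := by
  refine ⟨fun h v hv => h _ ?_, fun h y hy => ?_⟩
  · rwa [mulVec_mulVec, nonsing_inv_mul_cancel_right T A hT]
  · simpa [mulVec_mulVec, mul_nonsing_inv T hT] using h (T⁻¹ *ᵥ y) (by rwa [mulVec_mulVec])

end CommRing

section QuadForm

variable [Fintype ι] [Fintype κ]

def quadForm (S : Matrix ι ι ℂ) (x : ι → ℂ) : ℝ := (star x ⬝ᵥ S *ᵥ x).re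

theorem IsHermitian.posSemidef_iff_quadForm_nonneg {M : Matrix ι ι ℂ} (hM : M.IsHermitian) :
    M.PosSemidef ↔ ∀ x, 0 ≤ M.quadForm x := by
  rw [posSemidef_iff_dotProduct_mulVec]
  refine ⟨fun h x => (RCLike.nonneg_iff.mp (h.2 x)).1, fun h => ⟨hM, fun x => ?_⟩⟩
  exact RCLike.nonneg_iff.mpr ⟨h x, hM.im_star_dotProduct_mulVec_self x⟩

theorem quadForm_neg (S : Matrix ι ι ℂ) (x : ι → ℂ) : (-S).quadForm x = -S.quadForm x := by
  simp [quadForm, neg_mulVec]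

theorem quadForm_mulVec (S : Matrix ι ι ℂ) (A : Matrix ι κ ℂ) (x : κ → ℂ) :
    S.quadForm (A *ᵥ x) = (Aᴴ * S * A).quadForm x := by
  simp only [quadForm, star_mulVec, ← dotProduct_mulVec, mulVec_mulVec, Matrix.mul_assoc]

theorem quadForm_add_smul_of_orthogonal {S : Matrix ι ι ℂ} (hS : S.IsHermitian) {k u : ι → ℂ}
    (hku : star k ⬝ᵥ S *ᵥ u = 0) (c : ℂ) :
    S.quadForm (k + c • u) = S.quadForm k + Complex.normSq c * S.quadForm u := by
  have huk : star u ⬝ᵥ S *ᵥ k = 0 := by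
    rw [star_dotProduct, ← star_dotProduct_conjTranspose_mulVec, hS.eq, hku, star_zero]
  have hcc : star c * c = (Complex.normSq c : ℂ) := by
    rw [Complex.normSq_eq_conj_mul_self]; rfl
  simp only [quadForm, star_add, star_smul, mulVec_add, mulVec_smul, add_dotProduct,
    dotProduct_add, smul_dotProduct, dotProduct_smul, hku, huk, smul_eq_mul, mul_zero, add_zero,
    zero_add]
  rw [← mul_assoc, mul_comm c, hcc, Complex.add_re, Complex.re_ofReal_mul]

variable {S : Matrix ι ι ℂ}

theorem quadForm_nonpos_of_mem_sup_span_singleton (hS : S.IsHermitian) {K : Submodule ℂ (ι → ℂ)}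
    (hK : ∀ k ∈ K, S.quadForm k ≤ 0) {u : ι → ℂ} (hKu : ∀ k ∈ K, star k ⬝ᵥ S *ᵥ u = 0)
    (hu : S.quadForm u ≤ 0) : ∀ w ∈ K ⊔ ℂ ∙ u, S.quadForm w ≤ 0 := by
  intro w hw
  obtain ⟨k, hk, _, hs, rfl⟩ := Submodule.mem_sup.mp hw
  obtain ⟨c, rfl⟩ := Submodule.mem_span_singleton.mp hs
  rw [quadForm_add_smul_of_orthogonal hS (hKu k hk)]
  exact add_nonpos (hK k hk) (mul_nonpos_of_nonneg_of_nonpos (Complex.normSq_nonneg c) hu)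

theorem finrank_add_finrank_le_of_quadForm_pos_of_nonpos {P N : Submodule ℂ (ι → ℂ)}
    (hP : ∀ w ∈ P, w ≠ 0 → 0 < S.quadForm w) (hN : ∀ w ∈ N, S.quadForm w ≤ 0) :
    finrank ℂ P + finrank ℂ N ≤ Fintype.card ι := by
  rw [← Module.finrank_fintype_fun_eq_card ℂ]
  refine Submodule.finrank_add_finrank_le_of_disjoint <|
    Submodule.disjoint_def.mpr fun w hwP hwN => ?_
  by_contra hw
  exact (hP w hwP hw).not_ge (hN w hwN)

theorem quadForm_nonneg_of_orthogonal [DecidableEq ι] (hS : S.IsHermitian) (hS2 : S * S = 1)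
    {P K : Submodule ℂ (ι → ℂ)} (hP : ∀ w ∈ P, w ≠ 0 → 0 < S.quadForm w)
    (hK : ∀ k ∈ K, S.quadForm k ≤ 0) (hdim : finrank ℂ P + finrank ℂ K = Fintype.card ι)
    {x : ι → ℂ} (hx : ∀ k ∈ K, star k ⬝ᵥ x = 0) : 0 ≤ S.quadForm x := by
  set u := S *ᵥ x
  -- `u` is `S`-orthogonal to `K` and has the same `S`-value as `x`, since `S * S = 1`.
  have hSu : S *ᵥ u = x := by rw [mulVec_mulVec, hS2, one_mulVec]
  have hqu : S.quadForm u = S.quadForm x := by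
    rw [quadForm_mulVec, hS.eq, hS2, Matrix.one_mul]
  have hKu : ∀ k ∈ K, star k ⬝ᵥ S *ᵥ u = 0 := fun k hk => hSu ▸ hx k hk
  by_contra! hneg
  have huK : u ∉ K := fun hu => by
    rw [← hqu, quadForm, hKu u hu, Complex.zero_re] at hneg
    exact hneg.false
  have := finrank_add_finrank_le_of_quadForm_pos_of_nonpos hP
    (quadForm_nonpos_of_mem_sup_span_singleton hS hK hKu (hqu ▸ hneg.le))
  rw [Submodule.finrank_sup_span_singleton huK] at this
  omega

theorem quadForm_pos_of_mem_range {D : Matrix ι κ ℂ} (hD : (Dᴴ * S * D).PosDef) :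
    ∀ w ∈ LinearMap.range D.mulVecLin, w ≠ 0 → 0 < S.quadForm w := by
  rintro _ ⟨v, rfl⟩ hv
  rw [mulVecLin_apply, quadForm_mulVec]
  exact hD.re_dotProduct_pos (by rintro rfl; simp at hv)

theorem finrank_range_mulVecLin_of_posDef {D : Matrix ι κ ℂ} (hD : (Dᴴ * S * D).PosDef) :
    finrank ℂ (LinearMap.range D.mulVecLin) = Fintype.card κ := by
  rw [LinearMap.finrank_range_of_inj, Module.finrank_fintype_fun_eq_card]
  refine (injective_iff_map_eq_zero _).mpr fun v hv => ?_
  by_contra hv0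
  have hpos : 0 < S.quadForm (D *ᵥ v) := by
    rw [quadForm_mulVec]
    exact hD.re_dotProduct_pos hv0
  rw [← mulVecLin_apply, hv] at hpos
  simp [quadForm] at hpos

theorem posSemidef_mul_mul_conjTranspose_iff [Fintype m] [DecidableEq ι] (hS : S.IsHermitian)
    (hS2 : S * S = 1) (W : Matrix m ι ℂ) {P N : Submodule ℂ (ι → ℂ)}
    (hP : ∀ w ∈ P, w ≠ 0 → 0 < S.quadForm w) (hN : ∀ w ∈ N, w ≠ 0 → 0 < (-S).quadForm w)
    (hPdim : finrank ℂ P = W.rank) (hNdim : finrank ℂ N + W.rank = Fintype.card ι) :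
    (W * S * Wᴴ).PosSemidef ↔ ∀ y, W *ᵥ y = 0 → S.quadForm y ≤ 0 := by
  have hform (z : m → ℂ) : (W * S * Wᴴ).quadForm z = S.quadForm (Wᴴ *ᵥ z) := by
    rw [quadForm_mulVec, conjTranspose_conjTranspose]
  rw [(isHermitian_mul_mul_conjTranspose W hS).posSemidef_iff_quadForm_nonneg]
  constructor
  · intro h y hy
    have hRneg : ∀ x ∈ LinearMap.range Wᴴ.mulVecLin, (-S).quadForm x ≤ 0 := by
      rintro _ ⟨z, rfl⟩
      rw [mulVecLin_apply, quadForm_neg, ← hform]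
      exact neg_nonpos.mpr (h z)
    have hRdim : finrank ℂ N + finrank ℂ (LinearMap.range Wᴴ.mulVecLin) = Fintype.card ι := by
      rwa [← rank, rank_conjTranspose]
    have hyR : ∀ x ∈ LinearMap.range Wᴴ.mulVecLin, star x ⬝ᵥ y = 0 := by
      rintro _ ⟨z, rfl⟩
      rw [mulVecLin_apply, ← star_dotProduct_conjTranspose_mulVec, conjTranspose_conjTranspose, hy,
        dotProduct_zero]
    have := quadForm_nonneg_of_orthogonal hS.neg (by rw [neg_mul_neg, hS2]) hN hRneg hRdim hyR
    rwa [quadForm_neg, neg_nonneg] at this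
  · intro h z
    have hKdim : finrank ℂ P + finrank ℂ (LinearMap.ker W.mulVecLin) = Fintype.card ι := by
      rw [hPdim, rank, LinearMap.finrank_range_add_finrank_ker, Module.finrank_fintype_fun_eq_card]
    have hzK : ∀ k ∈ LinearMap.ker W.mulVecLin, star k ⬝ᵥ Wᴴ *ᵥ z = 0 := fun k hk => by
      rw [star_dotProduct_conjTranspose_mulVec, ← mulVecLin_apply, hk, star_zero, zero_dotProduct]
    rw [hform]
    exact quadForm_nonneg_of_orthogonal hS hS2 hP (fun k hk => h k hk) hKdim hzK

theorem quadForm_fromBlocks_zero_zero (A D : Matrix κ κ ℂ) (f g : κ → ℂ) :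
    (fromBlocks A 0 0 D).quadForm (Sum.elim f g) = A.quadForm f + D.quadForm g := by
  simp [quadForm, fromBlocks_mulVec, Function.star_sumElim]

end QuadForm

section Blocks

variable [DecidableEq κ]

theorem isHermitian_fromBlocks_zero_one_one_zero :
    (fromBlocks 0 1 1 0 : Matrix (κ ⊕ κ) (κ ⊕ κ) ℂ).IsHermitian := by
  simp [IsHermitian, fromBlocks_conjTranspose]

variable [Fintype κ]

theorem fromBlocks_zero_one_one_zero_mul_self :
    (fromBlocks 0 1 1 0 : Matrix (κ ⊕ κ) (κ ⊕ κ) ℂ) * fromBlocks 0 1 1 0 = 1 := by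
  simp [fromBlocks_multiply, fromBlocks_one]

theorem conjTranspose_fromRows_mul_fromBlocks_zero_one_one_zero_mul (A : Matrix κ κ ℂ) :
    (fromRows 1 A : Matrix (κ ⊕ κ) κ ℂ)ᴴ * (fromBlocks 0 1 1 0 : Matrix (κ ⊕ κ) (κ ⊕ κ) ℂ) *
      (fromRows 1 A : Matrix (κ ⊕ κ) κ ℂ) = Aᴴ + A := by
  rw [conjTranspose_fromRows_eq_fromCols_conjTranspose, fromCols_mul_fromBlocks,
    fromCols_mul_fromRows]
  simp

theorem quadForm_fromBlocks_zero_one_one_zero_fromBlocks_mulVec {A : Matrix κ κ ℂ}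
    (hA : A.IsHermitian) (f g : κ → ℂ) :
    (fromBlocks 0 1 1 0 : Matrix (κ ⊕ κ) (κ ⊕ κ) ℂ).quadForm (fromBlocks A (-A) 1 1 *ᵥ Sum.elim f g)
      = 2 * (star f ⬝ᵥ A *ᵥ f - star g ⬝ᵥ A *ᵥ g).re := by
  have hblocks : (fromBlocks A (-A) 1 1)ᴴ * fromBlocks 0 1 1 0 * fromBlocks A (-A) 1 1 =
      fromBlocks (A + A) 0 0 (-(A + A)) := by
    simp [fromBlocks_conjTranspose, fromBlocks_multiply, hA.eq]
  rw [quadForm_mulVec, hblocks, quadForm_fromBlocks_zero_zero]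
  simp only [quadForm, add_mulVec, neg_mulVec, dotProduct_add, dotProduct_neg, Complex.add_re,
    Complex.neg_re, Complex.sub_re]
  ring

theorem isUnit_det_fromBlocks_neg_one_one {A : Matrix κ κ ℂ} (hA : IsUnit A) :
    IsUnit (fromBlocks A (-A) 1 1).det := by
  rw [det_fromBlocks_one₂₂, Matrix.mul_one, sub_neg_eq_add, ← two_smul ℂ A, det_smul]
  exact (IsUnit.pow _ (by norm_num)).mul ((isUnit_iff_isUnit_det A).mp hA)

end Blocks

end Matrix

theorem stmt18 (n : ℕ) (P1 : Matrix (Fin n) (Fin n) ℂ)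
    (hHerm : P1.IsHermitian) (hInv : IsUnit P1)
    (Wt : Matrix (Fin n) (Fin n ⊕ Fin n) ℂ) (hrank : Wt.rank = n) :
    (∀ f1 f0 : Fin n → ℂ, Wt.mulVec (Sum.elim f1 f0) = 0 →
        (star f1 ⬝ᵥ P1.mulVec f1 - star f0 ⬝ᵥ P1.mulVec f0).re ≤ 0) ↔
      ((Wt * ((Matrix.fromBlocks P1 (-P1) (1 : Matrix (Fin n) (Fin n) ℂ) 1)⁻¹ : Matrix (Fin n ⊕ Fin n) (Fin n ⊕ Fin n) ℂ)) *
        (Matrix.fromBlocks (0 : Matrix (Fin n) (Fin n) ℂ) 1 1 0 : Matrix (Fin n ⊕ Fin n) (Fin n ⊕ Fin n) ℂ) *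
        (Wt * ((Matrix.fromBlocks P1 (-P1) (1 : Matrix (Fin n) (Fin n) ℂ) 1)⁻¹ : Matrix (Fin n ⊕ Fin n) (Fin n ⊕ Fin n) ℂ))ᴴ).PosSemidef := by
  set T : Matrix (Fin n ⊕ Fin n) (Fin n ⊕ Fin n) ℂ := fromBlocks P1 (-P1) 1 1
  set Sg : Matrix (Fin n ⊕ Fin n) (Fin n ⊕ Fin n) ℂ := fromBlocks 0 1 1 0
  set Dpos : Matrix (Fin n ⊕ Fin n) (Fin n) ℂ := fromRows 1 1
  set Dneg : Matrix (Fin n ⊕ Fin n) (Fin n) ℂ := fromRows 1 (-1)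
  have hT : IsUnit T.det := isUnit_det_fromBlocks_neg_one_one hInv
  have hrankW : (Wt * T⁻¹).rank = n := by
    rw [rank_mul_eq_left_of_isUnit_det _ _ (isUnit_nonsing_inv_det T hT), hrank]
  have hDpos : (Dposᴴ * Sg * Dpos).PosDef := by
    rw [conjTranspose_fromRows_mul_fromBlocks_zero_one_one_zero_mul, conjTranspose_one]
    exact PosDef.one.add PosDef.one
  have hDneg : (Dnegᴴ * -Sg * Dneg).PosDef := by
    rw [Matrix.mul_neg, Matrix.neg_mul, conjTranspose_fromRows_mul_fromBlocks_zero_one_one_zero_mul,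
      conjTranspose_neg, conjTranspose_one, neg_add, neg_neg]
    exact PosDef.one.add PosDef.one
  rw [posSemidef_mul_mul_conjTranspose_iff isHermitian_fromBlocks_zero_one_one_zero
    fromBlocks_zero_one_one_zero_mul_self _ (quadForm_pos_of_mem_range hDpos)
    (quadForm_pos_of_mem_range hDneg)
    (by rw [finrank_range_mulVecLin_of_posDef hDpos, hrankW, Fintype.card_fin])
    (by rw [finrank_range_mulVecLin_of_posDef hDneg, hrankW, Fintype.card_sum, Fintype.card_fin]),
    forall_mul_nonsing_inv_mulVec_eq_zero_imp_iff hT]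
  refine ⟨fun h v hv => ?_, fun h f1 f0 hf => ?_⟩
  · rw [← Sum.elim_comp_inl_inr v] at hv ⊢
    rw [quadForm_fromBlocks_zero_one_one_zero_fromBlocks_mulVec hHerm]
    linarith [h _ _ hv]
  · have := h _ hf
    rw [quadForm_fromBlocks_zero_one_one_zero_fromBlocks_mulVec hHerm] at this
    linarith
end
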